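/- arXiv:1805.07811 — 3 statements merged into one kernel-verified Lean document; each statement's English description precedes it below -/
import Mathlib

section
/- If (d_i)_{i≥0} is an admissible finitely supported sequence of nonnegative integers, then for every j ≥ 0 one has Σ_{i=0}^{j} d_i T_i < T_{j+1}. -/
/-!
The key identity is `∑_{i ≤ j} w_i T_{j-i} = T_{j+1} - 1` for the comparison word
`w = (a-1)(a+b-1)(a+b)(a+b)⋯`, i.e. the largest admissible word of length `j + 1` has value
`T_{j+1} - 1`. For an arbitrary admissible word, compare `d_j ⋯ d_0` with `w_0 ⋯ w_j`: either they
agree, or they first differ at position `m` with `d_{j-m} ≤ w_m - 1`. The lost `T_{j-m}` then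
dominates the tail `∑_{i < j-m} d_i T_i`, which is `< T_{j-m}` by strong induction, and the
remaining prefix of `w` contributes at most `T_{j+1} - 1` because all `w_i` and `T_i` are
nonnegative.
-/

open scoped BigOperators

/-- The recurrent integer sequence `T` with `T 0 = 1`, `T 1 = a`, `T 2 = a² + b`,
`T (n+3) = a T(n+2) + b T(n+1) + T n`. -/
def Tseq (a b : ℤ) : ℕ → ℤ
  | 0 => 1
  | 1 => a
  | 2 => a ^ 2 + b
  | n + 3 => a * Tseq a b (n + 2) + b * Tseq a b (n + 1) + Tseq a b n

/-- The comparison word `(a-1)(a+b-1)(a+b)(a+b)⋯`. -/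
def ruleWord (a b : ℤ) : ℕ → ℤ
  | 0 => a - 1
  | 1 => a + b - 1
  | _ + 2 => a + b

/-- The word `d j, d (j-1), …, d (j-k)` is lexicographically ≤ the word
`ruleWord 0, …, ruleWord k`. -/
def WordLe (a b : ℤ) (d : ℕ → ℕ) (j k : ℕ) : Prop :=
  (∀ i ≤ k, (d (j - i) : ℤ) = ruleWord a b i) ∨
    ∃ m ≤ k, (∀ i < m, (d (j - i) : ℤ) = ruleWord a b i) ∧ (d (j - m) : ℤ) < ruleWord a b m

/-- Every finite factor `d j ⋯ d (j-k)` is lexicographically ≤ `(a-1)(a+b-1)(a+b)⋯(a+b)`. -/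
def AdmissibleWord (a b : ℤ) (d : ℕ → ℕ) : Prop :=
  ∀ j k : ℕ, k ≤ j → WordLe a b d j k

/-- An admissible finitely supported digit sequence. -/
def IsAdmissible (a b : ℤ) (d : ℕ → ℕ) : Prop :=
  (Function.support d).Finite ∧ AdmissibleWord a b d

/-- The Rauzy norm `𝒩(x₁,x₂) = |(α + b/β)x₁ + x₂/β|`. -/
noncomputable def rnorm (b : ℤ) (β : ℝ) (α : ℂ) (x : Fin 2 → ℝ) : ℝ :=
  ‖(α + (b : ℂ) / (β : ℂ)) * (x 0 : ℂ) + (x 1 : ℂ) / (β : ℂ)‖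

/-- `𝒩₀(w) = inf {𝒩(w - p) : p ∈ ℤ²}`. -/
noncomputable def rnorm0 (b : ℤ) (β : ℝ) (α : ℂ) (w : Fin 2 → ℝ) : ℝ :=
  sInf {r | ∃ g : Fin 2 → ℤ, r = rnorm b β α (w - fun i => (g i : ℝ))}

/-- `δ(N) = N(1/β, 1/β²) − (Σ_{j≥1} d_j T_{j-1}, Σ_{j≥2} d_j T_{j-2})`. -/
noncomputable def deltaVec (a b : ℤ) (β : ℝ) (N : ℕ) (d : ℕ → ℕ) : Fin 2 → ℝ :=
  ![(N : ℝ) / β - ∑ᶠ j : ℕ, (d (j + 1) : ℝ) * (Tseq a b j : ℝ),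
    (N : ℝ) / β ^ 2 - ∑ᶠ j : ℕ, (d (j + 2) : ℝ) * (Tseq a b j : ℝ)]

/-- The matrix `B`. -/
noncomputable def Bmat (b : ℤ) (β : ℝ) : Matrix (Fin 2) (Fin 2) ℝ :=
  !![-b / β, -1 / β; 1 - b / β ^ 2, -1 / β ^ 2]

/-- The Rauzy fractal `𝓡 = {Σ_{i≥2} d_i α^i}` over admissible digit sequences,
where the digit sequence `(d_i)_{i≥2}` is encoded as `i ↦ d (i+2)`. -/
def RauzyFractal (a b : ℤ) (α : ℂ) : Set ℂ :=
  {z | ∃ d : ℕ → ℕ, AdmissibleWord a b d ∧ z = ∑' i : ℕ, (d i : ℂ) * α ^ (i + 2)}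

namespace Tseq

variable {a b : ℤ}

theorem add_three (a b : ℤ) (n : ℕ) :
    Tseq a b (n + 3) = a * Tseq a b (n + 2) + b * Tseq a b (n + 1) + Tseq a b n := rfl

theorem monotone (ha : 1 ≤ a) (hab : 1 ≤ a + b) : Monotone (Tseq a b) := by
  have step : ∀ n, 0 ≤ Tseq a b n ∧ Tseq a b n ≤ Tseq a b (n + 1) ∧
      Tseq a b (n + 1) ≤ Tseq a b (n + 2) := by
    intro n
    induction n with
    | zero => simp only [Tseq]; refine ⟨by norm_num, by omega, by nlinarith⟩
    | succ n ih =>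
      obtain ⟨h0, h01, h12⟩ := ih
      refine ⟨by omega, h12, ?_⟩
      -- `T (n+3) - T (n+2) = (a-1)(T (n+2) - T (n+1)) + (a+b-1) T (n+1) + T n`
      rw [add_three]
      nlinarith [mul_nonneg (sub_nonneg.2 ha) (sub_nonneg.2 h12),
        mul_nonneg (sub_nonneg.2 hab) (h0.trans h01)]
  exact monotone_nat_of_le_succ fun n => (step n).2.1

theorem one_le (ha : 1 ≤ a) (hab : 1 ≤ a + b) (n : ℕ) : 1 ≤ Tseq a b n :=
  Tseq.monotone ha hab n.zero_le

theorem mul_sum_range (a b : ℤ) (n : ℕ) :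
    (a + b) * ∑ i ∈ Finset.range (n + 1), Tseq a b i =
      Tseq a b (n + 2) + (1 - a) * Tseq a b (n + 1) + Tseq a b n - 1 := by
  induction n with
  | zero => simp [Tseq]; ring
  | succ n ih =>
    rw [Finset.sum_range_succ, mul_add, ih, show n + 1 + 2 = n + 3 from rfl, add_three]
    ring

end Tseq

theorem Finset.sum_range_succ_comm_sub {M : Type*} [AddCommMonoid M] (f : ℕ → ℕ → M) (n : ℕ) :
    ∑ i ∈ Finset.range (n + 1), f i (n - i) = ∑ i ∈ Finset.range (n + 1), f (n - i) i := by
  rw [← Finset.Nat.sum_antidiagonal_eq_sum_range_succ f, ← Finset.Nat.sum_antidiagonal_swap,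
    ← Finset.Nat.sum_antidiagonal_eq_sum_range_succ fun i k => f k i]
  rfl

theorem ruleWord_nonneg {a b : ℤ} (ha : 1 ≤ a) (hab : 1 ≤ a + b) (i : ℕ) :
    0 ≤ ruleWord a b i := by
  rcases i with _ | _ | _ <;> simp only [ruleWord] <;> omega

theorem sum_ruleWord_mul_Tseq (a b : ℤ) (j : ℕ) :
    ∑ i ∈ Finset.range (j + 1), ruleWord a b i * Tseq a b (j - i) = Tseq a b (j + 1) - 1 := by
  rw [Finset.sum_range_succ_comm_sub fun i k => ruleWord a b i * Tseq a b k]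
  rcases j with _ | _ | n
  · simp [ruleWord, Tseq]
  · simp [Finset.sum_range_succ, ruleWord, Tseq]; ring
  · have htail : ∀ i ∈ Finset.range (n + 1),
        ruleWord a b (n + 2 - i) * Tseq a b i = (a + b) * Tseq a b i := by
      intro i hi
      rw [show n + 2 - i = n - i + 2 by have := Finset.mem_range.1 hi; omega]
      rfl
    rw [Finset.sum_range_succ, Finset.sum_range_succ, Finset.sum_congr rfl htail,
      ← Finset.mul_sum, Tseq.mul_sum_range, show n + 2 + 1 = n + 3 from rfl, Tseq.add_three]
    simp only [show n + 2 - (n + 1) = 1 by omega, Nat.sub_self, ruleWord]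
    ring

section Digits

variable {a b : ℤ} {d : ℕ → ℕ} {j m : ℕ}

theorem sum_ruleWord_prefix_le (ha : 1 ≤ a) (hab : 1 ≤ a + b) (hmj : m ≤ j) :
    ∑ i ∈ Finset.range (m + 1), ruleWord a b i * Tseq a b (j - i) ≤ Tseq a b (j + 1) - 1 := by
  rw [← sum_ruleWord_mul_Tseq a b j]
  refine Finset.sum_le_sum_of_subset_of_nonneg (Finset.range_subset_range.2 (by omega)) ?_
  intro i _ _
  exact mul_nonneg (ruleWord_nonneg ha hab i) (zero_le_one.trans (Tseq.one_le ha hab _))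

theorem sum_digits_add_le_of_lex_lt (ha : 1 ≤ a) (hab : 1 ≤ a + b)
    (hpre : ∀ i < m, (d (j - i) : ℤ) = ruleWord a b i) (hlt : (d (j - m) : ℤ) < ruleWord a b m) :
    ∑ i ∈ Finset.range (m + 1), (d (j - i) : ℤ) * Tseq a b (j - i) + Tseq a b (j - m) ≤
      ∑ i ∈ Finset.range (m + 1), ruleWord a b i * Tseq a b (j - i) := by
  have hpre_sum : ∑ i ∈ Finset.range m, (d (j - i) : ℤ) * Tseq a b (j - i) =
      ∑ i ∈ Finset.range m, ruleWord a b i * Tseq a b (j - i) :=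
    Finset.sum_congr rfl fun i hi => by rw [hpre i (Finset.mem_range.1 hi)]
  have hlast : (d (j - m) : ℤ) * Tseq a b (j - m) + Tseq a b (j - m) ≤
      ruleWord a b m * Tseq a b (j - m) := by
    nlinarith [Tseq.one_le ha hab (j - m)]
  rw [Finset.sum_range_succ, Finset.sum_range_succ, hpre_sum]
  linarith

theorem sum_digits_rev_lt (ha : 1 ≤ a) (hab : 1 ≤ a + b) (hd : AdmissibleWord a b d) (j : ℕ) :
    ∑ i ∈ Finset.range (j + 1), (d (j - i) : ℤ) * Tseq a b (j - i) < Tseq a b (j + 1) := by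
  induction j using Nat.strong_induction_on with
  | _ j ih =>
  rcases hd j j le_rfl with heq | ⟨m, hmj, hpre, hlt⟩
  · calc ∑ i ∈ Finset.range (j + 1), (d (j - i) : ℤ) * Tseq a b (j - i)
          = ∑ i ∈ Finset.range (j + 1), ruleWord a b i * Tseq a b (j - i) :=
            Finset.sum_congr rfl fun i hi => by
              rw [heq i (Nat.lt_succ_iff.1 (Finset.mem_range.1 hi))]
      _ < Tseq a b (j + 1) := by rw [sum_ruleWord_mul_Tseq]; omega
  · have htail : ∑ i ∈ Finset.range (j - m),
        (d (j - (m + 1 + i)) : ℤ) * Tseq a b (j - (m + 1 + i)) < Tseq a b (j - m) := by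
      rcases Nat.lt_or_ge m j with hm | hm
      · have := ih (j - m - 1) (by omega)
        rw [show j - m - 1 + 1 = j - m by omega] at this
        simpa only [show ∀ i, j - (m + 1 + i) = j - m - 1 - i by omega] using this
      · simp [show j - m = 0 by omega, Tseq]
    have hsplit :=
      Finset.sum_range_add (fun i => (d (j - i) : ℤ) * Tseq a b (j - i)) (m + 1) (j - m)
    rw [show m + 1 + (j - m) = j + 1 by omega] at hsplit
    linarith [sum_digits_add_le_of_lex_lt ha hab hpre hlt, sum_ruleWord_prefix_le ha hab hmj]

end Digits

/-- For an admissible finitely supported digit sequence, `Σ_{i=0}^{j} d_i T_i < T (j+1)`. -/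
theorem admissible_partial_sum_lt (a b : ℤ) (hab : -a + 1 ≤ b) (hb : b ≤ -2)
    (d : ℕ → ℕ) (hd : IsAdmissible a b d) (j : ℕ) :
    ∑ i ∈ Finset.range (j + 1), (d i : ℤ) * Tseq a b i < Tseq a b (j + 1) :=
  (Finset.sum_range_succ_comm_sub (fun i _ => (d i : ℤ) * Tseq a b i) j).trans_lt
    (sum_digits_rev_lt (by omega) (by omega) hd.2 j)
end

section
/- For every finitely supported sequence (d_n)_{n≥0} of nonnegative integers, 𝒩(Σ_{n=0}^{∞} d_n B^n δ(1)) = 𝒩(δ(1)) · |Σ_{n=0}^{∞} d_n α^n|, where δ(1) = (1/β, 1/β²). -/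
open scoped BigOperators

/-! The linear form `L x = (α + b/β) x₀ + x₁/β`, whose modulus is the Rauzy norm, intertwines `B`
with multiplication by `ᾱ`: `L (B x) = ᾱ L x`. This is an identity between the elementary
symmetric functions of the three roots `β, α, ᾱ` of `P`. Hence `L (Σ dₙ Bⁿ δ(1))` is the
conjugate of `Σ dₙ αⁿ` times `L δ(1)`, and taking moduli gives the theorem. -/

open ComplexConjugate

theorem cubic_vieta {K : Type*} [Field K] {a b c x y z : K}
    (hxy : x ≠ y) (hxz : x ≠ z) (hyz : y ≠ z)
    (hx : x ^ 3 = a * x ^ 2 + b * x + c) (hy : y ^ 3 = a * y ^ 2 + b * y + c)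
    (hz : z ^ 3 = a * z ^ 2 + b * z + c) :
    x + y + z = a ∧ x * y + x * z + y * z = -b ∧ x * y * z = c := by
  have hxy' : x ^ 2 + x * y + y ^ 2 = a * (x + y) + b :=
    mul_left_cancel₀ (sub_ne_zero.2 hxy) (by linear_combination hx - hy)
  have hxz' : x ^ 2 + x * z + z ^ 2 = a * (x + z) + b :=
    mul_left_cancel₀ (sub_ne_zero.2 hxz) (by linear_combination hx - hz)
  have hσ1 : x + y + z = a :=
    mul_left_cancel₀ (sub_ne_zero.2 hyz) (by linear_combination hxy' - hxz')
  have hσ2 : x * y + x * z + y * z = -b := by linear_combination (x + y) * hσ1 - hxy'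
  exact ⟨hσ1, hσ2, by linear_combination hx - x ^ 2 * hσ1 + x * hσ2⟩

section RauzyForm

variable (b : ℤ) (β : ℝ) (α : ℂ)

noncomputable def rauzyForm : (Fin 2 → ℝ) →ₗ[ℝ] ℂ where
  toFun x := (α + b / β) * x 0 + x 1 / β
  map_add' x y := by push_cast [Pi.add_apply]; ring
  map_smul' r x := by simp only [Pi.smul_apply, smul_eq_mul, RingHom.id_apply,
    Complex.real_smul]; push_cast; ring

theorem rnorm_eq_norm_rauzyForm (x : Fin 2 → ℝ) : rnorm b β α x = ‖rauzyForm b β α x‖ := rfl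

variable {b β α}

theorem rauzyForm_Bmat_mulVec {γ : ℂ} (hβ : β ≠ 0) (hσ2 : β * α + β * γ + α * γ = -b)
    (hσ3 : β * α * γ = 1) (x : Fin 2 → ℝ) :
    rauzyForm b β α ((Bmat b β).mulVec x) = γ * rauzyForm b β α x := by
  have hβc : (β : ℂ) ≠ 0 := Complex.ofReal_ne_zero.2 hβ
  simp only [rauzyForm, LinearMap.coe_mk, AddHom.coe_mk, Bmat, Matrix.mulVec, dotProduct,
    Fin.sum_univ_two, Matrix.of_apply, Matrix.cons_val', Matrix.cons_val_zero, Matrix.cons_val_one,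
    Matrix.empty_val', Matrix.cons_val_fin_one]
  push_cast
  field_simp
  linear_combination (-(β : ℂ) * (b * x 0 + x 1)) * hσ2 + ((b - β ^ 2) * x 0 + x 1) * hσ3

theorem rauzyForm_Bmat_pow_mulVec {γ : ℂ} (hβ : β ≠ 0) (hσ2 : β * α + β * γ + α * γ = -b)
    (hσ3 : β * α * γ = 1) (n : ℕ) (x : Fin 2 → ℝ) :
    rauzyForm b β α ((Bmat b β ^ n).mulVec x) = γ ^ n * rauzyForm b β α x := by
  induction n generalizing x with
  | zero => simp
  | succ n ih =>
    rw [pow_succ, ← Matrix.mulVec_mulVec, ih, rauzyForm_Bmat_mulVec hβ hσ2 hσ3, pow_succ, mul_assoc]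

end RauzyForm

theorem rnorm_sum_pow_general (a b : ℤ)
    (β : ℝ) (hβ : 1 < β) (hβroot : β ^ 3 = a * β ^ 2 + b * β + 1)
    (α : ℂ) (hαim : α.im ≠ 0) (hαroot : α ^ 3 = a * α ^ 2 + b * α + 1)
    (d : ℕ → ℕ) (hd : (Function.support d).Finite) :
    rnorm b β α (∑ᶠ n : ℕ, (d n : ℝ) • (Bmat b β ^ n).mulVec ![1 / β, 1 / β ^ 2]) =
      rnorm b β α ![1 / β, 1 / β ^ 2] * ‖∑ᶠ n : ℕ, (d n : ℂ) * α ^ n‖ := by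
  have hβα : (β : ℂ) ≠ α := fun h => hαim (by rw [← h, Complex.ofReal_im])
  have hβα' : (β : ℂ) ≠ conj α := fun h => hαim (by simpa using congrArg Complex.im h)
  have hαα' : α ≠ conj α := fun h => hαim (Complex.conj_eq_iff_im.1 h.symm)
  obtain ⟨-, hσ2, hσ3⟩ := cubic_vieta hβα hβα' hαα' (by exact_mod_cast hβroot) hαroot
    (by simpa using congrArg conj hαroot)
  set v : Fin 2 → ℝ := ![1 / β, 1 / β ^ 2]
  have hsupp : (Function.support fun n => (d n : ℝ) • (Bmat b β ^ n).mulVec v).Finite :=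
    hd.subset fun n hn h => hn (by simp [h])
  have hconj : ∑ᶠ n, (d n : ℂ) * conj α ^ n = conj (∑ᶠ n, (d n : ℂ) * α ^ n) := by
    rw [map_finsum _ (hd.subset fun n hn h => hn (by simp [h]))]
    simp
  rw [rnorm_eq_norm_rauzyForm, rnorm_eq_norm_rauzyForm, map_finsum _ hsupp]
  simp_rw [map_smul, rauzyForm_Bmat_pow_mulVec (by positivity) hσ2 hσ3, Complex.real_smul,
    ← mul_assoc, ← finsum_mul, Complex.ofReal_natCast, hconj, norm_mul, Complex.norm_conj, mul_comm]

/-- For every finitely supported digit sequence,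
`𝒩(Σ_n d_n B^n δ(1)) = 𝒩(δ(1)) |Σ_n d_n α^n|`. -/
theorem rnorm_sum_pow (a b : ℤ) (hab : -a + 1 ≤ b) (hb : b ≤ -2)
    (β : ℝ) (hβ : 1 < β) (hβroot : β ^ 3 = a * β ^ 2 + b * β + 1)
    (α : ℂ) (hαim : α.im ≠ 0) (hαroot : α ^ 3 = a * α ^ 2 + b * α + 1)
    (hαabs : ‖α‖ < 1)
    (d : ℕ → ℕ) (hd : (Function.support d).Finite) :
    rnorm b β α (∑ᶠ n : ℕ, (d n : ℝ) • (Bmat b β ^ n).mulVec ![1 / β, 1 / β ^ 2]) =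
      rnorm b β α ![1 / β, 1 / β ^ 2] * ‖∑ᶠ n : ℕ, (d n : ℂ) * α ^ n‖ :=
  rnorm_sum_pow_general a b β hβ hβroot α hαim hαroot d hd
end

section
/- Let n ≥ 1 and let d_0, …, d_{n−1} be nonnegative integers, not all zero, such that Σ_{i=0}^{n−1} d_i β^i ≤ β^n. Then |Σ_{i=0}^{n−1} d_i α^i| ≥ |α|^n. -/
open scoped BigOperators

/-!
Write `F = Σ dᵢ Xⁱ ∈ ℤ[X]` and `P = X³ - a X² - b X - 1`. The resultant of `P` and `F` is the
integer `F(β) F(α) F(ᾱ) = F(β) |F(α)|²`. It is nonzero: `P` has no rational root (such a root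
would be an integer unit, hence real and equal to `β > 1`), so `P` is the minimal polynomial of `α`
over `ℚ`, and `F(α) = 0` would force `F(β) = 0`, whereas `F(β) > 0`. Hence `F(β) |F(α)|² ≥ 1`,
and `F(β) ≤ βⁿ` together with `β |α|² = 1` gives `|F(α)|² ≥ β⁻ⁿ = |α|²ⁿ`.
-/

open Polynomial ComplexConjugate

theorem aeval_conj_of_int (P : ℤ[X]) (z : ℂ) : aeval (conj z) P = conj (aeval z P) :=
  aeval_algHom_apply (Complex.conjAe.toAlgHom.restrictScalars ℤ) z P

section NonrealRoot

variable {P : ℤ[X]} {β : ℝ} {α : ℂ}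

theorem roots_map_complex_eq_of_im_ne_zero (hP : P.Monic) (hdeg : P.natDegree = 3)
    (hβ : aeval (β : ℂ) P = 0) (hα : aeval α P = 0) (hαim : α.im ≠ 0) :
    (P.map (algebraMap ℤ ℂ)).roots = {(β : ℂ), α, conj α} := by
  have hβα : (β : ℂ) ≠ α := fun h => hαim (by simpa using congrArg Complex.im h.symm)
  have hβα' : (β : ℂ) ≠ conj α := fun h => hαim (by simpa using congrArg Complex.im h.symm)
  have hαα' : α ≠ conj α := fun h => hαim (by
    have := congrArg Complex.im h; simp at this; linarith)
  have hnodup : ({(β : ℂ), α, conj α} : Multiset ℂ).Nodup := by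
    simp [hβα, hβα', hαα']
  have hmem : ∀ z : ℂ, aeval z P = 0 → z ∈ (P.map (algebraMap ℤ ℂ)).roots := fun z hz =>
    (mem_roots_map_of_injective (RingHom.injective_int _) hP.ne_zero).2 hz
  refine (Multiset.eq_of_le_of_card_le ((Multiset.le_iff_subset hnodup).2 ?_) ?_).symm
  · intro z hz
    simp only [Multiset.insert_eq_cons, Multiset.mem_cons, Multiset.mem_singleton] at hz
    rcases hz with rfl | rfl | rfl
    · exact hmem _ hβ
    · exact hmem _ hα
    · exact hmem _ (by rw [aeval_conj_of_int, hα, map_zero])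
  · calc (P.map (algebraMap ℤ ℂ)).roots.card ≤ (P.map (algebraMap ℤ ℂ)).natDegree :=
          card_roots' _
      _ = 3 := (hP.natDegree_map _).trans hdeg

theorem mul_normSq_eq_neg_coeff_zero (hP : P.Monic) (hdeg : P.natDegree = 3)
    (hβ : aeval (β : ℂ) P = 0) (hα : aeval α P = 0) (hαim : α.im ≠ 0) :
    β * Complex.normSq α = -P.coeff 0 := by
  have h := (IsAlgClosed.splits (P.map (algebraMap ℤ ℂ))).coeff_zero_eq_prod_roots_of_monic
    (hP.map _)
  rw [roots_map_complex_eq_of_im_ne_zero hP hdeg hβ hα hαim, coeff_map, hP.natDegree_map, hdeg] at h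
  apply Complex.ofReal_injective
  push_cast
  simp only [Multiset.insert_eq_cons, Multiset.prod_cons, Multiset.prod_singleton,
    ← Complex.mul_conj] at h ⊢
  rw [eq_intCast] at h
  linear_combination h

theorem resultant_eq_aeval_mul_normSq (hP : P.Monic) (hdeg : P.natDegree = 3)
    (hβ : aeval (β : ℂ) P = 0) (hα : aeval α P = 0) (hαim : α.im ≠ 0)
    {F : ℤ[X]} {m : ℕ} (hF : F.natDegree ≤ m) :
    ((resultant P F 3 m : ℤ) : ℝ) = aeval β F * Complex.normSq (aeval α F) := by
  have h := resultant_eq_prod_eval (P.map (algebraMap ℤ ℂ)) (F.map (algebraMap ℤ ℂ)) m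
    (natDegree_map_le.trans hF) (IsAlgClosed.splits _)
  rw [resultant_map_map, hP.natDegree_map, hdeg, (hP.map _).leadingCoeff, one_pow, one_mul,
    roots_map_complex_eq_of_im_ne_zero hP hdeg hβ hα hαim] at h
  apply Complex.ofReal_injective
  simp only [Multiset.insert_eq_cons, Multiset.map_cons, Multiset.map_singleton,
    Multiset.prod_cons, Multiset.prod_singleton, eval_map_algebraMap, aeval_conj_of_int] at h
  have hβF : ((aeval β F : ℝ) : ℂ) = aeval (β : ℂ) F := (aeval_algebraMap_apply ℂ β F).symm
  rw [Complex.ofReal_mul, ← Complex.mul_conj, hβF, ← h]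
  rfl

theorem irreducible_map_rat_of_im_ne_zero (hP : P.Monic) (hdeg : P.natDegree = 3)
    (hP0 : IsUnit (P.coeff 0))
    (hβ1 : 1 < β) (hβ : aeval (β : ℂ) P = 0) (hα : aeval α P = 0) (hαim : α.im ≠ 0) :
    Irreducible (P.map (algebraMap ℤ ℚ)) := by
  refine irreducible_of_degree_le_three_of_not_isRoot (by rw [hP.natDegree_map, hdeg]; decide)
    fun q hq => ?_
  rw [IsRoot, eval_map_algebraMap] at hq
  obtain ⟨r, rfl, hr⟩ := exists_integer_of_is_root_of_monic hP hq
  have hroot : ((r : ℝ) : ℂ) ∈ (P.map (algebraMap ℤ ℂ)).roots := by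
    rw [mem_roots_map_of_injective (RingHom.injective_int _) hP.ne_zero, Complex.ofReal_intCast]
    have h := aeval_algebraMap_apply ℚ r P
    rw [hq] at h
    simpa using h.symm
  rw [roots_map_complex_eq_of_im_ne_zero hP hdeg hβ hα hαim] at hroot
  simp only [Multiset.insert_eq_cons, Multiset.mem_cons, Multiset.mem_singleton] at hroot
  rcases hroot with h | h | h
  · rcases Int.isUnit_iff.1 (isUnit_of_dvd_unit hr hP0) with rfl | rfl <;>
      · simp only [Complex.ofReal_inj] at h; norm_num at h; linarith
  · exact hαim (by simp [← h])
  · exact hαim (by simpa using congrArg Complex.im h.symm)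

end NonrealRoot

theorem aeval_eq_zero_of_irreducible_of_aeval_eq_zero {K : Type*} [Field K] [CharZero K]
    {P F : ℤ[X]} (hP : P.Monic) (hirr : Irreducible (P.map (algebraMap ℤ ℚ))) {x y : K}
    (hx : aeval x P = 0) (hy : aeval y P = 0) (hF : aeval x F = 0) : aeval y F = 0 := by
  have hmin : P.map (algebraMap ℤ ℚ) = minpoly ℚ x :=
    minpoly.eq_of_irreducible_of_monic hirr (by rwa [aeval_map_algebraMap]) (hP.map _)
  obtain ⟨G, hG⟩ := minpoly.dvd ℚ x (p := F.map (algebraMap ℤ ℚ)) (by rwa [aeval_map_algebraMap])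
  have := congrArg (aeval y) hG
  rwa [aeval_map_algebraMap, ← hmin, map_mul, aeval_map_algebraMap, hy, zero_mul] at this

noncomputable def cubicPoly (a b : ℤ) : ℤ[X] := X ^ 3 - C a * X ^ 2 - C b * X - 1

theorem cubicPoly_monic (a b : ℤ) : (cubicPoly a b).Monic := by
  unfold cubicPoly; monicity!

theorem natDegree_cubicPoly (a b : ℤ) : (cubicPoly a b).natDegree = 3 := by
  unfold cubicPoly; compute_degree!

theorem coeff_zero_cubicPoly (a b : ℤ) : (cubicPoly a b).coeff 0 = -1 := by
  simp [cubicPoly]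

theorem aeval_cubicPoly_eq_zero_iff {A : Type*} [CommRing A] (a b : ℤ) (x : A) :
    aeval x (cubicPoly a b) = 0 ↔ x ^ 3 = a * x ^ 2 + b * x + 1 := by
  simp only [cubicPoly, map_sub, map_mul, map_pow, aeval_X, map_one, eq_intCast, map_intCast]
  constructor <;> intro h <;> linear_combination h

noncomputable def digitPoly (d : ℕ → ℕ) (n : ℕ) : ℤ[X] :=
  ∑ i ∈ Finset.range n, C (d i : ℤ) * X ^ i

theorem aeval_digitPoly {A : Type*} [CommRing A] (d : ℕ → ℕ) (n : ℕ) (x : A) :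
    aeval x (digitPoly d n) = ∑ i ∈ Finset.range n, (d i : A) * x ^ i := by
  simp [digitPoly]

theorem natDegree_digitPoly_le (d : ℕ → ℕ) (n : ℕ) : (digitPoly d n).natDegree ≤ n :=
  natDegree_sum_le_of_forall_le _ _ fun i hi =>
    (natDegree_C_mul_X_pow_le _ i).trans (Finset.mem_range.1 hi).le

theorem aeval_digitPoly_pos {d : ℕ → ℕ} {n : ℕ} (hne : ∃ i < n, d i ≠ 0) {x : ℝ} (hx : 0 < x) :
    0 < aeval x (digitPoly d n) := by
  obtain ⟨i, hi, hdi⟩ := hne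
  rw [aeval_digitPoly]
  exact Finset.sum_pos' (fun j _ => by positivity)
    ⟨i, Finset.mem_range.2 hi, mul_pos (by exact_mod_cast Nat.pos_of_ne_zero hdi) (pow_pos hx i)⟩

theorem pow_norm_le_norm_of_mul_normSq_eq_one {β r : ℝ} {x y : ℂ} {n : ℕ}
    (hβx : β * Complex.normSq x = 1) (hr : 0 < r) (hrβ : r ≤ β ^ n)
    (hry : 1 ≤ r * Complex.normSq y) : ‖x‖ ^ n ≤ ‖y‖ := by
  have hβ : 0 < β := pos_of_mul_pos_left (hβx ▸ one_pos) (Complex.normSq_nonneg x)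
  refine (pow_le_pow_iff_left₀ (by positivity) (norm_nonneg y) two_ne_zero).1 ?_
  calc (‖x‖ ^ n) ^ 2 = (β ^ n)⁻¹ := by
        rw [← pow_mul, mul_comm, pow_mul, Complex.sq_norm, eq_inv_of_mul_eq_one_right hβx, inv_pow]
    _ ≤ r⁻¹ := inv_anti₀ hr hrβ
    _ ≤ ‖y‖ ^ 2 := by
        rwa [Complex.sq_norm, inv_le_iff_one_le_mul₀' hr]

theorem abs_sum_alpha_ge_general (a b : ℤ)
    (β : ℝ) (hβ : 1 < β) (hβroot : β ^ 3 = a * β ^ 2 + b * β + 1)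
    (α : ℂ) (hαim : α.im ≠ 0) (hαroot : α ^ 3 = a * α ^ 2 + b * α + 1)
    (n : ℕ) (d : ℕ → ℕ) (hne : ∃ i < n, d i ≠ 0)
    (hsum : ∑ i ∈ Finset.range n, (d i : ℝ) * β ^ i ≤ β ^ n) :
    ‖α‖ ^ n ≤ ‖∑ i ∈ Finset.range n, (d i : ℂ) * α ^ i‖ := by
  have hP := cubicPoly_monic a b
  have hdeg := natDegree_cubicPoly a b
  have hPβ : aeval (β : ℂ) (cubicPoly a b) = 0 :=
    (aeval_cubicPoly_eq_zero_iff a b _).2 (by exact_mod_cast hβroot)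
  have hPα : aeval α (cubicPoly a b) = 0 := (aeval_cubicPoly_eq_zero_iff a b α).2 hαroot
  have hFβ : 0 < aeval β (digitPoly d n) := aeval_digitPoly_pos hne (zero_lt_one.trans hβ)
  have hFα : aeval α (digitPoly d n) ≠ 0 := fun h => hFβ.ne' <| by
    have hirr := irreducible_map_rat_of_im_ne_zero hP hdeg
      (by rw [coeff_zero_cubicPoly]; exact isUnit_one.neg) hβ hPβ hPα hαim
    have h' := aeval_eq_zero_of_irreducible_of_aeval_eq_zero hP hirr hPα hPβ h
    exact Complex.ofReal_eq_zero.1 ((aeval_algebraMap_apply ℂ β _).symm.trans h')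
  have hres := resultant_eq_aeval_mul_normSq hP hdeg hPβ hPα hαim (natDegree_digitPoly_le d n)
  have hres_pos : 0 < aeval β (digitPoly d n) * Complex.normSq (aeval α (digitPoly d n)) :=
    mul_pos hFβ (Complex.normSq_pos.2 hFα)
  have hres_ge_one : 1 ≤ aeval β (digitPoly d n) * Complex.normSq (aeval α (digitPoly d n)) := by
    rw [← hres] at hres_pos ⊢
    exact_mod_cast hres_pos
  have hβα := mul_normSq_eq_neg_coeff_zero hP hdeg hPβ hPα hαim
  rw [coeff_zero_cubicPoly, Int.cast_neg, Int.cast_one, neg_neg] at hβα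
  rw [← aeval_digitPoly] at hsum ⊢
  exact pow_norm_le_norm_of_mul_normSq_eq_one hβα hFβ hsum hres_ge_one

/-- If `d_0, …, d_{n−1}` are nonnegative integers, not all zero, with
`Σ d_i β^i ≤ β^n`, then `|Σ d_i α^i| ≥ |α|^n`. -/
theorem abs_sum_alpha_ge (a b : ℤ) (hab : -a + 1 ≤ b) (hb : b ≤ -2)
    (β : ℝ) (hβ : 1 < β) (hβroot : β ^ 3 = a * β ^ 2 + b * β + 1)
    (α : ℂ) (hαim : α.im ≠ 0) (hαroot : α ^ 3 = a * α ^ 2 + b * α + 1)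
    (hαabs : ‖α‖ < 1)
    (n : ℕ) (hn : 1 ≤ n) (d : ℕ → ℕ) (hne : ∃ i < n, d i ≠ 0)
    (hsum : ∑ i ∈ Finset.range n, (d i : ℝ) * β ^ i ≤ β ^ n) :
    ‖α‖ ^ n ≤ ‖∑ i ∈ Finset.range n, (d i : ℂ) * α ^ i‖ :=
  abs_sum_alpha_ge_general a b β hβ hβroot α hαim hαroot n d hne hsum
end
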